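/- Let w ∈ ℂ, r > 0, z ∈ ℂ. For every n ∈ ℕ, |S_{w,n+1}(z)| ≤ τ(w,z)ⁿ · (√(τ(w,z)² + (Im w)²) + |Im w|), where τ(w,z) = √|Δ_w(z)| and S_{w,2m}(z) = Δ_w(z)^m, S_{w,2m+1}(z) = Δ_w(z)^m (z−w). -/

import Mathlib

/-- The characteristic polynomial `Δ_w(z) = (z-w)(z-conj w)`. -/
noncomputable def Delta (w z : ℂ) : ℂ := (z - w) * (z - (starRingEnd ℂ) w)

/-- The Cassini pseudo-metric `τ(w,z) = √|Δ_w(z)|`. -/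
noncomputable def tau (w z : ℂ) : ℝ := Real.sqrt (‖Delta w z‖)

/-- The complex spherical polynomials: `S_{w,2m}(z) = Δ_w(z)^m`,
`S_{w,2m+1}(z) = Δ_w(z)^m (z−w)`. -/
noncomputable def Sph (w : ℂ) (n : ℕ) (z : ℂ) : ℂ :=
  Delta w z ^ (n / 2) * (if n % 2 = 1 then z - w else 1)

/-!
Write `a = |z - w|`, `c = |z - w̄|` and `b = |Im w|`, so that `τ² = a c`. For even `n` the
polynomial `S_{w,n+1}` has modulus `τⁿ a`; since `|w - w̄| = 2b`, the triangle inequality gives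
`c ≥ a - 2b`, hence `(a - b)² ≤ a c + b² = τ² + b²` and `a ≤ √(τ² + b²) + b`. For odd `n` it has
modulus `τⁿ τ`, and trivially `τ ≤ √(τ² + b²)`.
-/

open ComplexConjugate

lemma le_sqrt_sq_add_of_mul_sub_le {a b t : ℝ} (h : a * (a - 2 * b) ≤ t ^ 2) :
    a ≤ Real.sqrt (t ^ 2 + b ^ 2) + b := by
  have : a - b ≤ Real.sqrt (t ^ 2 + b ^ 2) := Real.le_sqrt_of_sq_le (by nlinarith)
  linarith

lemma abs_le_sqrt_sq_add (t b : ℝ) : |t| ≤ Real.sqrt (t ^ 2 + b ^ 2) :=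
  Real.abs_le_sqrt (le_add_of_nonneg_right (sq_nonneg b))

lemma Complex.norm_sub_conj (w : ℂ) : ‖w - conj w‖ = 2 * |w.im| := by
  simp [Complex.sub_conj, Complex.norm_real]

lemma Complex.norm_sub_sub_two_abs_im_le (w z : ℂ) :
    ‖z - w‖ - 2 * |w.im| ≤ ‖z - conj w‖ := by
  have h := norm_sub_le (z - conj w) (w - conj w)
  rw [sub_sub_sub_cancel_right, Complex.norm_sub_conj] at h
  linarith

lemma tau_nonneg (w z : ℂ) : 0 ≤ tau w z := Real.sqrt_nonneg _

lemma tau_sq (w z : ℂ) : tau w z ^ 2 = ‖z - w‖ * ‖z - conj w‖ := by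
  rw [tau, Real.sq_sqrt (norm_nonneg _), Delta, norm_mul]

lemma norm_sub_le_sqrt_tau_sq_add (w z : ℂ) :
    ‖z - w‖ ≤ Real.sqrt (tau w z ^ 2 + w.im ^ 2) + |w.im| := by
  rw [← sq_abs w.im]
  refine le_sqrt_sq_add_of_mul_sub_le ?_
  rw [tau_sq]
  exact mul_le_mul_of_nonneg_left (Complex.norm_sub_sub_two_abs_im_le w z) (norm_nonneg _)

lemma norm_Sph_two_mul (w z : ℂ) (m : ℕ) : ‖Sph w (2 * m) z‖ = tau w z ^ (2 * m) := by
  rw [pow_mul, tau_sq, Sph, Nat.mul_div_cancel_left m two_pos, if_neg (by omega), mul_one,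
    norm_pow, Delta, norm_mul]

lemma norm_Sph_two_mul_add_one (w z : ℂ) (m : ℕ) :
    ‖Sph w (2 * m + 1) z‖ = tau w z ^ (2 * m) * ‖z - w‖ := by
  rw [pow_mul, tau_sq, Sph, if_pos (by omega), show (2 * m + 1) / 2 = m by omega, norm_mul,
    norm_pow, Delta, norm_mul]

/-- Upper bound for the spherical polynomials:
`|S_{w,n+1}(z)| ≤ τ(w,z)ⁿ·(√(τ(w,z)² + (Im w)²) + |Im w|)`. -/
theorem sph_abs_le (w z : ℂ) (n : ℕ) :
    ‖Sph w (n + 1) z‖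
      ≤ tau w z ^ n * (Real.sqrt (tau w z ^ 2 + w.im ^ 2) + |w.im|) := by
  obtain ⟨m, rfl | rfl⟩ := Nat.even_or_odd' n
  · rw [norm_Sph_two_mul_add_one]
    exact mul_le_mul_of_nonneg_left (norm_sub_le_sqrt_tau_sq_add w z)
      (pow_nonneg (tau_nonneg w z) _)
  · rw [show 2 * m + 1 + 1 = 2 * (m + 1) by ring, norm_Sph_two_mul, pow_succ]
    refine mul_le_mul_of_nonneg_left ?_ (pow_nonneg (tau_nonneg w z) _)
    calc tau w z = |tau w z| := (abs_of_nonneg (tau_nonneg w z)).symm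
      _ ≤ Real.sqrt (tau w z ^ 2 + w.im ^ 2) := abs_le_sqrt_sq_add _ _
      _ ≤ _ := le_add_of_nonneg_right (abs_nonneg _)
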